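/- For a simplicial complex Δ on [n] and α ∈ ℕ^n with positive entries, the expansion of the Stanley–Reisner ideal equals the Stanley–Reisner ideal of the expansion: I_Δ^α = I_{Δ^α}. -/

import Mathlib

open Finset

/-- An abstract simplicial complex on vertex type `V`: a downward closed
family of finite subsets of `V`. -/
structure AbstractComplex (V : Type*) where
  faces : Set (Finset V)
  down_closed : ∀ {s t : Finset V}, s ∈ faces → t ⊆ s → t ∈ faces

namespace AbstractComplex

variable {V : Type*}

/-- A facet is a maximal face. -/
def IsFacet (Δ : AbstractComplex V) (s : Finset V) : Prop :=
  s ∈ Δ.faces ∧ ∀ t ∈ Δ.faces, s ⊆ t → s = t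

/-- A complex is pure if all facets have the same cardinality. -/
def IsPure (Δ : AbstractComplex V) : Prop :=
  ∀ s t : Finset V, Δ.IsFacet s → Δ.IsFacet t → s.card = t.card

/-- The link of a (potential) face `F`. -/
def link [DecidableEq V] (Δ : AbstractComplex V) (F : Finset V) : AbstractComplex V where
  faces := {G | G ∩ F = ∅ ∧ G ∪ F ∈ Δ.faces}
  down_closed := by
    rintro s t ⟨h1, h2⟩ hts
    refine ⟨subset_empty.mp ?_, Δ.down_closed h2 (union_subset_union hts subset_rfl)⟩
    exact h1 ▸ inter_subset_inter hts subset_rfl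

/-- The faces of cardinality `q` (i.e. dimension `q - 1`). -/
abbrev Face (Δ : AbstractComplex V) (q : ℕ) := {s : Finset V // s ∈ Δ.faces ∧ s.card = q}

/-- The simplicial boundary map on reduced chains with coefficients in `K`,
from chains spanned by faces of cardinality `q+1` to those spanned by faces of
cardinality `q`. -/
noncomputable def boundary (K : Type*) [Field K] [LinearOrder V]
    (Δ : AbstractComplex V) (q : ℕ) :
    (Δ.Face (q + 1) →₀ K) →ₗ[K] (Δ.Face q →₀ K) :=
  Finsupp.lsum K fun s => LinearMap.toSpanSingleton K _
    (∑ x ∈ s.1.attach,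
      ((-1 : K) ^ (s.1.filter (fun y => y < x.1)).card) •
        Finsupp.single (⟨s.1.erase x.1,
          Δ.down_closed s.2.1 (erase_subset _ _), by
            rw [card_erase_of_mem x.2, s.2.2]; omega⟩ : Δ.Face q) (1 : K))

/-- `Δ.RHTriv K i` says that the `i`-th reduced simplicial homology of `Δ`
with coefficients in `K` vanishes. -/
def RHTriv (K : Type*) [Field K] [LinearOrder V] (Δ : AbstractComplex V) : ℤ → Prop
  | Int.ofNat i =>
      LinearMap.ker (Δ.boundary K i) ≤ LinearMap.range (Δ.boundary K (i + 1))
  | Int.negSucc 0 => ⊤ ≤ LinearMap.range (Δ.boundary K 0)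
  | Int.negSucc (_ + 1) => True

/-- `Δ.dimLT i` means `i < dim Δ`. -/
def dimLT (Δ : AbstractComplex V) (i : ℤ) : Prop :=
  ∃ s ∈ Δ.faces, i + 2 ≤ (s.card : ℤ)

/-- Cohen–Macaulayness over `K`, via Reisner's criterion. -/
def IsCM (K : Type*) [Field K] [LinearOrder V] (Δ : AbstractComplex V) : Prop :=
  ∀ F ∈ Δ.faces, ∀ i : ℤ, (Δ.link F).dimLT i → (Δ.link F).RHTriv K i

/-- `CM_t`: pure, and the link of every face of cardinality at least `t`
is Cohen–Macaulay. -/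
def IsCMt (K : Type*) [Field K] [LinearOrder V] (t : ℕ) (Δ : AbstractComplex V) : Prop :=
  Δ.IsPure ∧ ∀ F ∈ Δ.faces, t ≤ F.card → IsCM K (Δ.link F)

/-- Buchsbaum-ness: pure and the reduced homology of the link of every nonempty
face vanishes below its dimension. -/
def IsBuchsbaum (K : Type*) [Field K] [LinearOrder V] (Δ : AbstractComplex V) : Prop :=
  Δ.IsPure ∧ ∀ G ∈ Δ.faces, G ≠ ∅ →
    ∀ i : ℤ, (Δ.link G).dimLT i → (Δ.link G).RHTriv K i

end AbstractComplex

/-- The expansion `F^α` of a finite vertex set. -/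
def expandSet {V : Type*} (α : V → ℕ) (F : Finset V) : Finset (Σ i, Fin (α i)) :=
  F.sigma fun _ => Finset.univ

namespace AbstractComplex

/-- The expansion `Δ^α` of a simplicial complex: the complex generated by the
expansions of the facets of `Δ`. -/
def expand {V : Type*} (Δ : AbstractComplex V) (α : V → ℕ) :
    AbstractComplex (Σ i, Fin (α i)) where
  faces := {σ | ∃ F, Δ.IsFacet F ∧ σ ⊆ expandSet α F}
  down_closed := fun ⟨F, hF, hsub⟩ hts => ⟨F, hF, hts.trans hsub⟩

end AbstractComplex

/-- A linear order on the expanded vertex set (lexicographic). -/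
noncomputable instance sigmaFinLinearOrder {V : Type*} [LinearOrder V] {α : V → ℕ} :
    LinearOrder (Σ i, Fin (α i)) :=
  LinearOrder.lift' (toLex : (Σ i, Fin (α i)) → Σₗ i, Fin (α i)) toLex.injective

/-- `I` is a monomial ideal: generated by a set of monomials. -/
def IsMonomialIdeal {K : Type*} [Field K] {σ : Type*} (I : Ideal (MvPolynomial σ K)) : Prop :=
  ∃ M : Set (σ →₀ ℕ), I = Ideal.span ((fun m => MvPolynomial.monomial m (1 : K)) '' M)

/-- The minimal monomial generators `G(I)` of a monomial ideal, recorded by their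
exponent vectors: monomials in `I` that are minimal with respect to divisibility. -/
def minGens {K : Type*} [Field K] {σ : Type*} (I : Ideal (MvPolynomial σ K)) : Set (σ →₀ ℕ) :=
  {m | MvPolynomial.monomial m (1 : K) ∈ I ∧
    ∀ m', MvPolynomial.monomial m' (1 : K) ∈ I → m' ≤ m → m' = m}

/-- The prime ideal `P_j = (x_{j1}, …, x_{jk_j})` in the expanded polynomial ring. -/
noncomputable def varIdeal {K : Type*} [Field K] {V : Type*} (α : V → ℕ) (j : V) :
    Ideal (MvPolynomial (Σ i, Fin (α i)) K) :=
  Ideal.span (Set.range fun r : Fin (α j) => MvPolynomial.X ⟨j, r⟩)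

/-- The Bayati–Herzog expansion `I^α = Σ_{u ∈ G(I)} P_1^{ν_1(u)} ⋯ P_n^{ν_n(u)}`
of a monomial ideal. -/
noncomputable def expandIdeal {K : Type*} [Field K] {V : Type*} [Fintype V] (α : V → ℕ)
    (I : Ideal (MvPolynomial V K)) : Ideal (MvPolynomial (Σ i, Fin (α i)) K) :=
  ⨆ m ∈ minGens I, ∏ j : V, (varIdeal α j) ^ (m j)

/-- The Stanley–Reisner ideal of `Δ`: generated by the squarefree monomials
corresponding to non-faces of `Δ`. -/
noncomputable def srIdeal (K : Type*) [Field K] {V : Type*} (Δ : AbstractComplex V) :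
    Ideal (MvPolynomial V K) :=
  Ideal.span {p | ∃ G : Finset V, G ∉ Δ.faces ∧ p = ∏ i ∈ G, MvPolynomial.X i}

/-!
The minimal generators of `I_Δ` are the squarefree monomials `x_G` of the minimal non-faces `G`,
so `I_Δ^α` is the sum of the ideals `∏_{j ∈ G} P_j`. Such a product is spanned by the squarefree
monomials `x_H` of the sets `H` of expanded vertices whose projection `H.image Sigma.fst` contains
`G`. As `H` is a face of `Δ^α` exactly when its projection is a face of `Δ`, the monomials `x_H`
obtained this way are exactly the generators of `I_{Δ^α}`.
-/

open MvPolynomial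

namespace AbstractComplex

variable {V : Type*}

theorem exists_isFacet_superset [Finite V] {Δ : AbstractComplex V} {s : Finset V}
    (hs : s ∈ Δ.faces) : ∃ F, Δ.IsFacet F ∧ s ⊆ F := by
  obtain ⟨F, hsF, hF, hmax⟩ := Finite.exists_le_maximal (p := (· ∈ Δ.faces)) hs
  exact ⟨F, ⟨hF, fun t ht hFt => le_antisymm hFt (hmax ht hFt)⟩, hsF⟩

theorem mem_expand_faces_iff [Finite V] [DecidableEq V] {Δ : AbstractComplex V} {α : V → ℕ}
    {H : Finset (Σ i, Fin (α i))} :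
    H ∈ (Δ.expand α).faces ↔ H.image Sigma.fst ∈ Δ.faces := by
  constructor
  · rintro ⟨F, hF, hHF⟩
    refine Δ.down_closed hF.1 fun i hi => ?_
    obtain ⟨v, hv, rfl⟩ := Finset.mem_image.1 hi
    exact (Finset.mem_sigma.1 (hHF hv)).1
  · intro h
    obtain ⟨F, hF, hHF⟩ := exists_isFacet_superset h
    exact ⟨F, hF, fun v hv =>
      Finset.mem_sigma.2 ⟨hHF (Finset.mem_image_of_mem _ hv), Finset.mem_univ _⟩⟩

end AbstractComplex

section StanleyReisner

variable {K : Type*} [Field K] {V : Type*}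

theorem prod_X_eq_monomial_indicator (G : Finset V) :
    ∏ i ∈ G, X i = monomial (Finsupp.indicator G fun _ _ => 1) (1 : K) := by
  simpa using prod_X_pow (R := K) (fun _ => 1) G

theorem indicator_one_le_iff (G : Finset V) (u : V →₀ ℕ) :
    Finsupp.indicator G (fun _ _ => 1) ≤ u ↔ G ⊆ u.support := by
  classical
  simp only [Finsupp.le_def, Finsupp.indicator_apply, Finset.subset_iff, Finsupp.mem_support_iff]
  refine ⟨fun h i hi => ?_, fun h i => ?_⟩
  · exact Nat.one_le_iff_ne_zero.1 (by simpa [hi] using h i)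
  · split_ifs with hi
    · exact Nat.one_le_iff_ne_zero.2 (h hi)
    · exact Nat.zero_le _

theorem srIdeal_eq_span_monomial (Δ : AbstractComplex V) :
    srIdeal K Δ = Ideal.span ((fun m => monomial m (1 : K)) ''
      {m | ∃ G ∉ Δ.faces, m = Finsupp.indicator G fun _ _ => 1}) := by
  rw [srIdeal]
  congr 1
  ext p
  constructor
  · rintro ⟨G, hG, rfl⟩
    exact ⟨_, ⟨G, hG, rfl⟩, (prod_X_eq_monomial_indicator G).symm⟩
  · rintro ⟨_, ⟨G, hG, rfl⟩, rfl⟩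
    exact ⟨G, hG, (prod_X_eq_monomial_indicator G).symm⟩

theorem monomial_mem_srIdeal_iff (Δ : AbstractComplex V) (u : V →₀ ℕ) :
    monomial u (1 : K) ∈ srIdeal K Δ ↔ u.support ∉ Δ.faces := by
  classical
  rw [srIdeal_eq_span_monomial, mem_ideal_span_monomial_image, support_monomial,
    if_neg one_ne_zero]
  simp only [Finset.mem_singleton, forall_eq]
  constructor
  · rintro ⟨_, ⟨G, hG, rfl⟩, hGu⟩ hu
    exact hG (Δ.down_closed hu ((indicator_one_le_iff G u).1 hGu))
  · exact fun hu => ⟨_, ⟨u.support, hu, rfl⟩, (indicator_one_le_iff _ u).2 subset_rfl⟩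

theorem indicator_one_mem_minGens_srIdeal {Δ : AbstractComplex V} {G : Finset V}
    (hG : Minimal (· ∉ Δ.faces) G) :
    Finsupp.indicator G (fun _ _ => 1) ∈ minGens (srIdeal K Δ) := by
  have hsupp : (Finsupp.indicator G fun _ _ => 1 : V →₀ ℕ).support = G :=
    (Finsupp.support_indicator_subset _ _).antisymm ((indicator_one_le_iff G _).1 le_rfl)
  refine ⟨(monomial_mem_srIdeal_iff Δ _).2 (hsupp.symm ▸ hG.1), fun m hm hle => ?_⟩
  have hmG : m.support = G :=
    hG.eq_of_le ((monomial_mem_srIdeal_iff Δ m).1 hm) (hsupp ▸ Finsupp.support_mono hle)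
  exact le_antisymm hle ((indicator_one_le_iff G m).2 hmG.ge)

end StanleyReisner

theorem Ideal.prod_pow_le_prod_support {R ι : Type*} [CommSemiring R] [Fintype ι]
    (P : ι → Ideal R) (m : ι →₀ ℕ) : ∏ j, P j ^ m j ≤ ∏ j ∈ m.support, P j := by
  rw [← Finset.prod_subset m.support.subset_univ fun j _ hj => by
    rw [Finsupp.notMem_support_iff.1 hj, pow_zero]]
  exact Finset.prod_le_prod' fun j hj => Ideal.pow_le_self (Finsupp.mem_support_iff.1 hj)

theorem Finset.prod_pow_indicator_one {M ι : Type*} [CommMonoid M] [Fintype ι] (f : ι → M)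
    (G : Finset ι) : ∏ j, f j ^ Finsupp.indicator G (fun _ _ => 1) j = ∏ j ∈ G, f j := by
  classical
  simp [Finsupp.indicator_apply, pow_ite, Finset.prod_ite_mem]

section Expansion

variable {K : Type*} [Field K] {V : Type*} {α : V → ℕ}

theorem prod_X_mem_prod_varIdeal_image [DecidableEq V] (H : Finset (Σ i, Fin (α i))) :
    ∏ v ∈ H, X v ∈ ∏ j ∈ H.image Sigma.fst, varIdeal (K := K) α j := by
  rw [← Finset.prod_fiberwise_of_maps_to fun v hv => Finset.mem_image_of_mem Sigma.fst hv]
  refine Ideal.prod_mem_prod fun j hj => ?_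
  obtain ⟨v, hv, rfl⟩ := Finset.mem_image.1 hj
  exact Ideal.prod_mem _ (Finset.mem_filter.2 ⟨hv, rfl⟩) (Ideal.subset_span ⟨v.2, rfl⟩)

theorem prod_varIdeal_le_span [DecidableEq V] (S : Finset V) :
    ∏ j ∈ S, varIdeal (K := K) α j ≤
      Ideal.span {p | ∃ H : Finset (Σ i, Fin (α i)),
        S ⊆ H.image Sigma.fst ∧ p = ∏ v ∈ H, X v} := by
  induction S using Finset.induction_on with
  | empty =>
    rw [Finset.prod_empty, Ideal.one_eq_top, top_le_iff, Ideal.eq_top_iff_one]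
    exact Ideal.subset_span ⟨∅, Finset.empty_subset _, Finset.prod_empty.symm⟩
  | insert a S ha ih =>
    rw [Finset.prod_insert ha]
    refine (Ideal.mul_mono_right ih).trans ?_
    rw [varIdeal, Ideal.span_mul_span', Ideal.span_le]
    rintro _ ⟨_, ⟨r, rfl⟩, _, ⟨H, hSH, rfl⟩, rfl⟩
    by_cases hr : (⟨a, r⟩ : Σ i, Fin (α i)) ∈ H
    · exact Ideal.mul_mem_left _ _
        (Ideal.subset_span ⟨H, Finset.insert_subset (Finset.mem_image_of_mem _ hr) hSH, rfl⟩)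
    · refine Ideal.subset_span ⟨insert ⟨a, r⟩ H, ?_, (Finset.prod_insert hr).symm⟩
      rw [Finset.image_insert]
      exact Finset.insert_subset_insert _ hSH

theorem prod_varIdeal_eq_span [DecidableEq V] (S : Finset V) :
    ∏ j ∈ S, varIdeal (K := K) α j =
      Ideal.span {p | ∃ H : Finset (Σ i, Fin (α i)),
        S ⊆ H.image Sigma.fst ∧ p = ∏ v ∈ H, X v} := by
  refine (prod_varIdeal_le_span S).antisymm (Ideal.span_le.2 ?_)
  rintro _ ⟨H, hSH, rfl⟩
  have hmono : ∏ j ∈ H.image Sigma.fst, varIdeal (K := K) α j ≤ ∏ j ∈ S, varIdeal α j :=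
    Finset.prod_le_prod_of_subset_of_le_one' hSH fun _ _ _ => le_top.trans_eq Ideal.one_eq_top.symm
  exact hmono (prod_X_mem_prod_varIdeal_image H)

end Expansion

theorem expandIdeal_srIdeal_general (K : Type*) [Field K] {V : Type*} [Fintype V]
    (Δ : AbstractComplex V) (α : V → ℕ) :
    expandIdeal α (srIdeal K Δ) = srIdeal K (Δ.expand α) := by
  classical
  apply le_antisymm
  · refine iSup₂_le fun m hm => (Ideal.prod_pow_le_prod_support _ m).trans ?_
    have hnf : m.support ∉ Δ.faces := (monomial_mem_srIdeal_iff Δ m).1 hm.1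
    rw [prod_varIdeal_eq_span, Ideal.span_le]
    rintro _ ⟨H, hH, rfl⟩
    refine Ideal.subset_span ⟨H, fun hface => hnf ?_, rfl⟩
    exact Δ.down_closed (AbstractComplex.mem_expand_faces_iff.1 hface) hH
  · refine Ideal.span_le.2 ?_
    rintro _ ⟨H, hH, rfl⟩
    obtain ⟨G, hGH, hG⟩ := exists_minimal_le_of_wellFoundedLT (· ∉ Δ.faces) _
      (mt AbstractComplex.mem_expand_faces_iff.2 hH)
    refine le_iSup₂ (f := fun m (_ : m ∈ minGens (srIdeal K Δ)) =>
      ∏ j, varIdeal (K := K) α j ^ m j) _ (indicator_one_mem_minGens_srIdeal hG) ?_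
    rw [Finset.prod_pow_indicator_one, prod_varIdeal_eq_span]
    exact Ideal.subset_span ⟨H, hGH, rfl⟩

/-- `I_Δ^α = I_{Δ^α}`. -/
theorem expandIdeal_srIdeal (K : Type*) [Field K] {V : Type*} [Fintype V]
    (Δ : AbstractComplex V) (α : V → ℕ) (hα : ∀ i, 1 ≤ α i) :
    expandIdeal α (srIdeal K Δ) = srIdeal K (Δ.expand α) :=
  expandIdeal_srIdeal_general K Δ α
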